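/- arXiv:1411.7092 — 3 statements merged into one kernel-verified Lean document; each statement's English description precedes it below -/
import Mathlib

section
/- Let T be a symmetric positive definite linear operator on an n-dimensional real inner product space V with eigenvalues 0 < λ₁ ≤ ⋯ ≤ λₙ counted with multiplicity. Suppose β > 0 satisfies ⟨Tv, v⟩ ≤ β⟨v, v⟩ for all v ∈ V, and suppose there exist α > 0, 0 ≤ m < n, and a subspace W ⊆ V with dim W = n − m such that ⟨Tv, v⟩ ≥ α⟨v, v⟩ for all v ∈ W. Then the m-th effective condition number of T satisfies κ_m(T) = λₙ / λ_{m+1} ≤ β/α. -/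
/-!
Testing the upper bound on the top eigenvector gives `λₙ ≤ β`. For the lower bound, `W` has
dimension `n - m` while only `n - m - 1` coordinates lie above index `m`, so some nonzero
`w ∈ W` has all those coordinates zero; in the eigenbasis `⟪T w, w⟫ = ∑ λᵢ wᵢ²`, so
`α ‖w‖² ≤ ⟪T w, w⟫ ≤ λ_{m+1} ‖w‖²` and `α ≤ λ_{m+1}`.
-/

open Module
open scoped RealInnerProductSpace

theorem Module.Basis.exists_mem_ne_zero_forall_repr_eq_zero {ι K V : Type*} [Field K]
    [AddCommGroup V] [Module K V] (b : Basis ι K V) (s : Finset ι) (W : Submodule K V)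
    [FiniteDimensional K W] (hW : s.card < finrank K W) :
    ∃ x ∈ W, x ≠ 0 ∧ ∀ i ∈ s, b.repr x i = 0 := by
  let f : W →ₗ[K] s → K := LinearMap.pi fun i => (b.coord i).comp W.subtype
  obtain ⟨x, hx, hx0⟩ := Submodule.exists_mem_ne_zero_of_ne_bot <|
    LinearMap.ker_ne_bot_of_finrank_lt (f := f) (by simpa using hW)
  refine ⟨x, x.2, by simpa using hx0, fun i hi => ?_⟩
  simpa [f] using congrFun (LinearMap.mem_ker.1 hx) ⟨i, hi⟩

theorem Module.Basis.repr_apply_of_apply_eq_smul {ι R M : Type*} [CommSemiring R]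
    [AddCommMonoid M] [Module R M] (b : Basis ι R M) {T : M →ₗ[R] M} {lam : ι → R}
    (hb : ∀ i, T (b i) = lam i • b i) (x : M) (i : ι) :
    b.repr (T x) i = lam i * b.repr x i := by
  have : (b.coord i).comp T = lam i • b.coord i := b.ext fun j => by
    rcases eq_or_ne j i with rfl | hji
    · simp [hb]
    · simp [hb, hji]
  exact LinearMap.congr_fun this x

namespace OrthonormalBasis

variable {ι V : Type*} [Fintype ι] [NormedAddCommGroup V] [InnerProductSpace ℝ V]
  (b : OrthonormalBasis ι ℝ V) {T : V →ₗ[ℝ] V} {lam : ι → ℝ}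

theorem repr_apply_of_apply_eq_smul (hb : ∀ i, T (b i) = lam i • b i) (x : V) (i : ι) :
    b.repr (T x) i = lam i * b.repr x i := by
  simpa only [b.coe_toBasis_repr_apply] using
    b.toBasis.repr_apply_of_apply_eq_smul (by simpa only [b.coe_toBasis] using hb) x i

theorem inner_map_self_eq_sum (hb : ∀ i, T (b i) = lam i • b i) (x : V) :
    ⟪T x, x⟫ = ∑ i, lam i * b.repr x i ^ 2 := by
  simp only [← b.repr.inner_map_map (T x), PiLp.inner_apply, b.repr_apply_of_apply_eq_smul hb]
  simp [sq, mul_left_comm]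

theorem inner_self_eq_sum (x : V) : ⟪x, x⟫ = ∑ i, b.repr x i ^ 2 := by
  rw [← b.repr.inner_map_map x x]
  simp only [PiLp.inner_apply, RCLike.inner_apply, conj_trivial, sq]

theorem inner_map_self_le_of_repr_ne_zero (hb : ∀ i, T (b i) = lam i • b i) {μ : ℝ} {x : V}
    (hx : ∀ i, b.repr x i ≠ 0 → lam i ≤ μ) : ⟪T x, x⟫ ≤ μ * ⟪x, x⟫ := by
  rw [b.inner_map_self_eq_sum hb, b.inner_self_eq_sum, Finset.mul_sum]
  refine Finset.sum_le_sum fun i _ => ?_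
  by_cases hi : b.repr x i = 0
  · simp [hi]
  · exact mul_le_mul_of_nonneg_right (hx i hi) (sq_nonneg _)

theorem le_of_forall_inner_map_self_le (hb : ∀ i, T (b i) = lam i • b i) {β : ℝ}
    (hupper : ∀ v, ⟪T v, v⟫ ≤ β * ⟪v, v⟫) (i : ι) : lam i ≤ β := by
  simpa [hb, real_inner_smul_left] using hupper (b i)

theorem le_of_forall_mem_le_inner_map_self [FiniteDimensional ℝ V]
    (hb : ∀ i, T (b i) = lam i • b i) {s : Finset ι} {μ : ℝ} (hμ : ∀ i ∉ s, lam i ≤ μ)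
    {W : Submodule ℝ V} (hW : s.card < finrank ℝ W) {α : ℝ}
    (hlower : ∀ v ∈ W, α * ⟪v, v⟫ ≤ ⟪T v, v⟫) : α ≤ μ := by
  obtain ⟨x, hxW, hx0, hxs⟩ := b.toBasis.exists_mem_ne_zero_forall_repr_eq_zero s W hW
  have hsupp : ∀ i, b.repr x i ≠ 0 → lam i ≤ μ := fun i hi =>
    hμ i fun his => hi (by simpa only [b.coe_toBasis_repr_apply] using hxs i his)
  refine le_of_mul_le_mul_right ?_ (real_inner_self_pos.2 hx0)
  exact (hlower x hxW).trans (b.inner_map_self_le_of_repr_ne_zero hb hsupp)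

end OrthonormalBasis

/-- If `T` is a symmetric positive definite operator on an `n`-dimensional real inner
product space with eigenvalues `0 < λ₁ ≤ ⋯ ≤ λₙ` (counted with multiplicity, realized by an
orthonormal eigenbasis), `⟪Tv, v⟫ ≤ β⟪v, v⟫` for all `v`, and `⟪Tv, v⟫ ≥ α⟪v, v⟫` on a
subspace `W` of dimension `n - m` (with `0 ≤ m < n`, `α > 0`), then the `m`-th effective
condition number satisfies `κ_m(T) = λₙ / λ_{m+1} ≤ β / α`. -/
theorem stmt_2 {V : Type*} [NormedAddCommGroup V] [InnerProductSpace ℝ V]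
    [FiniteDimensional ℝ V] (n : ℕ)
    (T : V →ₗ[ℝ] V)
    (lam : Fin n → ℝ) (hmono : Monotone lam)
    (b : OrthonormalBasis (Fin n) ℝ V) (hb : ∀ i, T (b i) = lam i • b i)
    (β : ℝ) (hβ : 0 < β) (hupper : ∀ v : V, ⟪T v, v⟫ ≤ β * ⟪v, v⟫)
    (α : ℝ) (hα : 0 < α) (m : ℕ) (hm : m < n)
    (W : Submodule ℝ V) (hW : Module.finrank ℝ W = n - m)
    (hlower : ∀ v ∈ W, α * ⟪v, v⟫ ≤ ⟪T v, v⟫) :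
    lam ⟨n - 1, by omega⟩ / lam ⟨m, hm⟩ ≤ β / α := by
  have hmax : lam ⟨n - 1, by omega⟩ ≤ β := b.le_of_forall_inner_map_self_le hb hupper _
  have hmin : α ≤ lam ⟨m, hm⟩ :=
    b.le_of_forall_mem_le_inner_map_self hb (s := Finset.Ioi ⟨m, hm⟩)
      (fun i hi => hmono (not_lt.1 (by simpa using hi)))
      (by rw [Fin.card_Ioi, hW, Fin.val_mk]; omega) hlower
  exact div_le_div₀ hβ.le hmax hα hmin
end

section
/- Let H be a real Hilbert space and let V₀ ⊆ V₁ ⊆ ⋯ ⊆ V_L be a finite increasing chain of closed subspaces of H, with Q_k the orthogonal projection of H onto V_k for each k. Let 0 < γ < 1. Then for every v ∈ V_L one has Σ_{k=1}^{L} γ^{−2k} ‖v − Q_{k−1} v‖² ≤ (1 − γ²)^{−1} Σ_{k=1}^{L} γ^{−2k} ‖Q_k v − Q_{k−1} v‖². -/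
/-!
Since the `V k` increase and `v ∈ V L`, Pythagoras telescopes `‖v - Q_{k-1} v‖²` into the tail
sum `∑_{j ≥ k} ‖Q_j v - Q_{j-1} v‖²`. Exchanging the two sums, the weight of the `j`-th
increment becomes `∑_{k ≤ j} γ^{-2k}`, a geometric sum bounded by `(1 - γ²)⁻¹ γ^{-2j}`.
-/

open Finset

namespace Submodule

variable {𝕜 E : Type*} [RCLike 𝕜] [NormedAddCommGroup E] [InnerProductSpace 𝕜 E]

theorem norm_sub_starProjection_sq_of_le {U W : Submodule 𝕜 E}
    [U.HasOrthogonalProjection] [W.HasOrthogonalProjection] (h : U ≤ W) (v : E) :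
    ‖v - U.starProjection v‖ ^ 2 =
      ‖v - W.starProjection v‖ ^ 2 + ‖W.starProjection v - U.starProjection v‖ ^ 2 := by
  have hperp : inner 𝕜 (v - W.starProjection v) (W.starProjection v - U.starProjection v) = 0 :=
    W.starProjection_inner_eq_zero v _
      (W.sub_mem (W.starProjection_apply_mem v) (h (U.starProjection_apply_mem v)))
  rw [← sub_add_sub_cancel v (W.starProjection v), sq, sq, sq,
    norm_add_sq_eq_norm_sq_add_norm_sq_of_inner_eq_zero _ _ hperp]

theorem norm_sub_starProjection_sq_eq_sum {V : ℕ → Submodule 𝕜 E}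
    [∀ k, (V k).HasOrthogonalProjection] {m n : ℕ} (hmn : m ≤ n)
    (hmono : ∀ k < n, V k ≤ V (k + 1)) (v : E) :
    ‖v - (V m).starProjection v‖ ^ 2 = ‖v - (V n).starProjection v‖ ^ 2 +
      ∑ j ∈ Ioc m n, ‖(V j).starProjection v - (V (j - 1)).starProjection v‖ ^ 2 := by
  induction n, hmn using Nat.le_induction with
  | base => simp
  | succ n hmn ih =>
    rw [ih fun k hk => hmono k (by omega), sum_Ioc_succ_top hmn, Nat.add_sub_cancel,
      norm_sub_starProjection_sq_of_le (hmono n n.lt_succ_self)]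
    ring

end Submodule

theorem sum_mul_sum_Icc_le {α R : Type*} [LinearOrder α] [LocallyFiniteOrder α]
    [CommSemiring R] [PartialOrder R] [IsOrderedRing R] {w b : α → R} {C : R} {a n : α}
    (hb : ∀ j ∈ Icc a n, 0 ≤ b j) (hw : ∀ j ∈ Icc a n, ∑ k ∈ Icc a j, w k ≤ C * w j) :
    ∑ k ∈ Icc a n, w k * ∑ j ∈ Icc k n, b j ≤ C * ∑ j ∈ Icc a n, w j * b j := by
  calc ∑ k ∈ Icc a n, w k * ∑ j ∈ Icc k n, b j
      = ∑ j ∈ Icc a n, (∑ k ∈ Icc a j, w k) * b j := by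
        simp only [mul_sum, sum_mul]
        refine sum_comm' fun k j => ?_
        simp only [mem_Icc]
        constructor <;> rintro ⟨⟨h1, h2⟩, h3, h4⟩ <;> exact ⟨⟨by order, by order⟩, by order, by order⟩
    _ ≤ ∑ j ∈ Icc a n, C * w j * b j :=
        sum_le_sum fun j hj => mul_le_mul_of_nonneg_right (hw j hj) (hb j hj)
    _ = C * ∑ j ∈ Icc a n, w j * b j := by simp only [mul_sum, mul_assoc]

theorem sum_Icc_inv_pow_le {q : ℝ} (hq0 : 0 < q) (hq1 : q < 1) (n : ℕ) :
    ∑ k ∈ Icc 1 n, (q ^ k)⁻¹ ≤ (1 - q)⁻¹ * (q ^ n)⁻¹ := by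
  have hq : 0 < 1 - q := by linarith
  induction n with
  | zero => simp [hq.le]
  | succ n ih =>
    have hstep : (1 - q)⁻¹ * (q ^ n)⁻¹ + (q ^ (n + 1))⁻¹ = (1 - q)⁻¹ * (q ^ (n + 1))⁻¹ := by
      field_simp
      ring
    rw [sum_Icc_succ_top (by omega), ← hstep]
    linarith

theorem stmt_6_general {H : Type*} [NormedAddCommGroup H] [InnerProductSpace ℝ H]
    (L : ℕ) (V : ℕ → Submodule ℝ H)
    [inst : ∀ k, Submodule.HasOrthogonalProjection (V k)]
    (hmono : ∀ k < L, V k ≤ V (k + 1))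
    (γ : ℝ) (hγ0 : 0 < γ) (hγ1 : γ < 1)
    (v : H) (hv : v ∈ V L) :
    ∑ k ∈ Finset.Icc 1 L,
        (γ ^ k)⁻¹ ^ 2 * ‖v - ((V (k - 1)).orthogonalProjectionOnto v : H)‖ ^ 2
      ≤ (1 - γ ^ 2)⁻¹ *
        ∑ k ∈ Finset.Icc 1 L,
          (γ ^ k)⁻¹ ^ 2 *
            ‖((V k).orthogonalProjectionOnto v : H) - ((V (k - 1)).orthogonalProjectionOnto v : H)‖ ^ 2 := by
  simp only [Submodule.coe_orthogonalProjectionOnto_apply]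
  have htail : ∀ k ∈ Icc 1 L, ‖v - (V (k - 1)).starProjection v‖ ^ 2 =
      ∑ j ∈ Icc k L, ‖(V j).starProjection v - (V (j - 1)).starProjection v‖ ^ 2 := by
    intro k hk
    obtain ⟨hk1, hkL⟩ := mem_Icc.1 hk
    have hIoc : Ioc (k - 1) L = Icc k L := by ext; simp only [mem_Ioc, mem_Icc]; omega
    rw [Submodule.norm_sub_starProjection_sq_eq_sum (by omega) hmono,
      (V L).starProjection_eq_self_iff.2 hv, sub_self, norm_zero, hIoc]
    ring
  have hweight : ∀ k : ℕ, (γ ^ k)⁻¹ ^ 2 = ((γ ^ 2) ^ k)⁻¹ := fun k => by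
    rw [inv_pow, ← pow_mul, ← pow_mul, mul_comm]
  rw [sum_congr rfl fun k hk => by rw [htail k hk]]
  refine sum_mul_sum_Icc_le (fun j _ => by positivity) fun j _ => ?_
  simpa only [hweight] using sum_Icc_inv_pow_le (by positivity) (by nlinarith) j

/-- Multilevel stable decomposition estimate: for a finite increasing chain of closed
subspaces `V 0 ⊆ ⋯ ⊆ V L` of a real Hilbert space with orthogonal projections `Q k` and
`0 < γ < 1`, every `v ∈ V L` satisfies
`∑_{k=1}^{L} γ^{−2k} ‖v − Q_{k−1} v‖² ≤ (1 − γ²)⁻¹ ∑_{k=1}^{L} γ^{−2k} ‖Q_k v − Q_{k−1} v‖²`. -/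
theorem stmt_6 {H : Type*} [NormedAddCommGroup H] [InnerProductSpace ℝ H] [CompleteSpace H]
    (L : ℕ) (V : ℕ → Submodule ℝ H) (hclosed : ∀ k, IsClosed (V k : Set H))
    [inst : ∀ k, Submodule.HasOrthogonalProjection (V k)]
    (hmono : ∀ k < L, V k ≤ V (k + 1))
    (γ : ℝ) (hγ0 : 0 < γ) (hγ1 : γ < 1)
    (v : H) (hv : v ∈ V L) :
    ∑ k ∈ Finset.Icc 1 L,
        (γ ^ k)⁻¹ ^ 2 * ‖v - ((V (k - 1)).orthogonalProjectionOnto v : H)‖ ^ 2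
      ≤ (1 - γ ^ 2)⁻¹ *
        ∑ k ∈ Finset.Icc 1 L,
          (γ ^ k)⁻¹ ^ 2 *
            ‖((V k).orthogonalProjectionOnto v : H) - ((V (k - 1)).orthogonalProjectionOnto v : H)‖ ^ 2 :=
  stmt_6_general L V (inst := inst) hmono γ hγ0 hγ1 v hv
end

section
/- Let V be a finite-dimensional real inner product space and let V₀, V₁, …, V_L be linear subspaces of V with V = V₀ + V₁ + ⋯ + V_L. For each k let Q_k : V → V_k denote the orthogonal projection onto V_k, and let R_k : V_k → V_k be a symmetric positive definite linear map. Define B : V → V by B v = Σ_{k=0}^{L} R_k (Q_k v), where R_k (Q_k v) ∈ V_k ⊆ V. Then B is symmetric positive definite, and for every v ∈ V, ⟨B⁻¹ v, v⟩ = min { Σ_{k=0}^{L} ⟨R_k⁻¹ v_k, v_k⟩ : v_k ∈ V_k for each k and Σ_{k=0}^{L} v_k = v }. -/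
open scoped RealInnerProductSpace

/-!
For a symmetric positive definite `R` with inverse `S`, expanding `0 ≤ ⟪R (S u - a), S u - a⟫`
gives the Fenchel-type bound `2 ⟪u, a⟫ - ⟪R a, a⟫ ≤ ⟪S u, u⟫`, with equality at `u = R a`.
If `B w = v` and `v = ∑ k, u k` with `u k ∈ V_k`, apply it on each `V_k` with `a = Q_k w` and sum:
since `⟪u k, Q_k w⟫ = ⟪u k, w⟫`, the left-hand sides add up to `2 ⟪v, w⟫ - ⟪B w, w⟫ = ⟪w, v⟫`,
and the decomposition `u k = R_k (Q_k w)` attains it.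
-/

section QuadraticBound

variable {E : Type*} [NormedAddCommGroup E] [InnerProductSpace ℝ E]

theorem LinearMap.inner_map_self_nonneg_of_pos {T : E →ₗ[ℝ] E}
    (hT : ∀ x, x ≠ 0 → 0 < ⟪T x, x⟫) (x : E) : 0 ≤ ⟪T x, x⟫ := by
  obtain rfl | hx := eq_or_ne x 0
  · simp
  · exact (hT x hx).le

theorem LinearMap.IsPositive.two_mul_inner_sub_le_inner_of_comp_eq_id {R S : E →ₗ[ℝ] E}
    (hR : R.IsPositive) (hRS : R ∘ₗ S = LinearMap.id) (u a : E) :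
    2 * ⟪u, a⟫ - ⟪R a, a⟫ ≤ ⟪S u, u⟫ := by
  have hu : R (S u) = u := LinearMap.congr_fun hRS u
  have hexpand : ⟪R (S u - a), S u - a⟫ = ⟪S u, u⟫ - 2 * ⟪u, a⟫ + ⟪R a, a⟫ := by
    rw [map_sub, hu, inner_sub_left, inner_sub_right, inner_sub_right, hR.isSymmetric a (S u), hu,
      real_inner_comm (S u) u, real_inner_comm a u]
    ring
  linarith [hR.inner_nonneg_left (S u - a)]

end QuadraticBound

section AdditiveSchwarz

variable {V : Type*} [NormedAddCommGroup V] [InnerProductSpace ℝ V] {ι : Type*}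
  (K : ι → Submodule ℝ V) [∀ i, (K i).HasOrthogonalProjection]

theorem exists_orthogonalProjectionOnto_ne_zero_of_iSup_eq_top (hK : ⨆ i, K i = ⊤) {v : V}
    (hv : v ≠ 0) : ∃ i, (K i).orthogonalProjectionOnto v ≠ 0 := by
  by_contra! h
  have hv' : v ∈ (⨆ i, K i)ᗮ := by
    rw [← Submodule.iInf_orthogonal, Submodule.mem_iInf]
    exact fun i => Submodule.orthogonalProjectionOnto_eq_zero_iff.mp (h i)
  rw [hK, Submodule.top_orthogonal_eq_bot, Submodule.mem_bot] at hv'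
  exact hv hv'

variable [Fintype ι]

noncomputable def additiveSchwarz (R : ∀ i, K i →ₗ[ℝ] K i) : V →ₗ[ℝ] V :=
  ∑ i, (K i).subtype ∘ₗ R i ∘ₗ ((K i).orthogonalProjectionOnto : V →ₗ[ℝ] K i)

variable {K} (R : ∀ i, K i →ₗ[ℝ] K i)

theorem additiveSchwarz_apply (v : V) :
    additiveSchwarz K R v = ∑ i, (R i ((K i).orthogonalProjectionOnto v) : V) := by
  simp [additiveSchwarz]

theorem inner_additiveSchwarz_apply (x y : V) :
    ⟪additiveSchwarz K R x, y⟫ =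
      ∑ i, ⟪R i ((K i).orthogonalProjectionOnto x), (K i).orthogonalProjectionOnto y⟫ := by
  simp_rw [additiveSchwarz_apply, sum_inner, Submodule.inner_orthogonalProjectionOnto_eq_of_mem_left]

theorem isSymmetric_additiveSchwarz (hR : ∀ i, (R i).IsSymmetric) :
    (additiveSchwarz K R).IsSymmetric := fun x y => by
  rw [inner_additiveSchwarz_apply, ← real_inner_comm x, inner_additiveSchwarz_apply]
  exact Finset.sum_congr rfl fun i _ => by rw [hR i, real_inner_comm]

theorem inner_additiveSchwarz_self_pos (hK : ⨆ i, K i = ⊤)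
    (hR : ∀ i x, x ≠ 0 → 0 < ⟪R i x, x⟫) {v : V} (hv : v ≠ 0) :
    0 < ⟪additiveSchwarz K R v, v⟫ := by
  obtain ⟨i, hi⟩ := exists_orthogonalProjectionOnto_ne_zero_of_iSup_eq_top K hK hv
  rw [inner_additiveSchwarz_apply]
  exact Finset.sum_pos' (fun j _ => LinearMap.inner_map_self_nonneg_of_pos (hR j) _)
    ⟨i, Finset.mem_univ _, hR i _ hi⟩

theorem isLeast_inner_additiveSchwarz {S : ∀ i, K i →ₗ[ℝ] K i} (hR : ∀ i, (R i).IsPositive)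
    (hRS : ∀ i, R i ∘ₗ S i = LinearMap.id) (hSR : ∀ i, S i ∘ₗ R i = LinearMap.id) (w : V) :
    IsLeast {r : ℝ | ∃ u : ∀ i, K i, ∑ i, (u i : V) = additiveSchwarz K R w ∧
      r = ∑ i, ⟪S i (u i), u i⟫} ⟪w, additiveSchwarz K R w⟫ := by
  have hw : ⟪w, additiveSchwarz K R w⟫ =
      ∑ i, ⟪R i ((K i).orthogonalProjectionOnto w), (K i).orthogonalProjectionOnto w⟫ := by
    rw [real_inner_comm, inner_additiveSchwarz_apply]
  refine ⟨⟨fun i => R i ((K i).orthogonalProjectionOnto w), (additiveSchwarz_apply R w).symm, ?_⟩, ?_⟩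
  · rw [hw]
    exact Finset.sum_congr rfl fun i _ => by
      rw [show ∀ x, S i (R i x) = x from LinearMap.congr_fun (hSR i), real_inner_comm]
  · rintro r ⟨u, hu, rfl⟩
    have hcross : ∑ i, ⟪u i, (K i).orthogonalProjectionOnto w⟫ = ⟪w, additiveSchwarz K R w⟫ := by
      simp_rw [Submodule.inner_orthogonalProjectionOnto_eq_of_mem_left]
      rw [← sum_inner, hu, real_inner_comm]
    calc ⟪w, additiveSchwarz K R w⟫
        = ∑ i, (2 * ⟪u i, (K i).orthogonalProjectionOnto w⟫ -
            ⟪R i ((K i).orthogonalProjectionOnto w), (K i).orthogonalProjectionOnto w⟫) := by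
          rw [Finset.sum_sub_distrib, ← Finset.mul_sum, hcross, ← hw]
          ring
      _ ≤ ∑ i, ⟪S i (u i), u i⟫ := Finset.sum_le_sum fun i _ =>
          (hR i).two_mul_inner_sub_le_inner_of_comp_eq_id (hRS i) _ _

end AdditiveSchwarz

/-- BPX identity: let `V` be a finite-dimensional real inner product space, decomposed as a
(not necessarily direct) sum of subspaces `V = V₀ + ⋯ + V_L`, let `Q k` be the orthogonal
projection onto `Vsub k`, and let `R k : Vsub k → Vsub k` be symmetric positive definite
with inverse `S k`. Then `B := ∑ k, R k ∘ Q k` is symmetric positive definite, and for every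
`v`, `⟪B⁻¹ v, v⟫` equals the minimum of `∑ k ⟪(R k)⁻¹ v_k, v_k⟫` over all decompositions
`v = ∑ k v_k` with `v_k ∈ Vsub k`. -/
theorem stmt_11 {V : Type*} [NormedAddCommGroup V] [InnerProductSpace ℝ V]
    [FiniteDimensional ℝ V] (L : ℕ) (Vsub : Fin (L + 1) → Submodule ℝ V)
    (hsum : (⨆ k, Vsub k) = ⊤)
    (R S : ∀ k, Vsub k →ₗ[ℝ] Vsub k)
    (hRsymm : ∀ k (x y : Vsub k), ⟪((R k x : Vsub k) : V), (y : V)⟫ = ⟪(x : V), ((R k y : Vsub k) : V)⟫)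
    (hRpos : ∀ k (x : Vsub k), x ≠ 0 → 0 < ⟪((R k x : Vsub k) : V), (x : V)⟫)
    (hS : ∀ k, (R k).comp (S k) = LinearMap.id ∧ (S k).comp (R k) = LinearMap.id)
    (B : V →ₗ[ℝ] V)
    (hB : ∀ v : V, B v = ∑ k, (((R k) ((Vsub k).orthogonalProjection v) : Vsub k) : V)) :
    (∀ x y : V, ⟪B x, y⟫ = ⟪x, B y⟫) ∧ (∀ v : V, v ≠ 0 → 0 < ⟪B v, v⟫) ∧
    (∀ v w : V, B w = v →
      IsLeast {r : ℝ | ∃ u : ∀ k, Vsub k, (∑ k, ((u k : V))) = v ∧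
        r = ∑ k, ⟪(((S k) (u k) : Vsub k) : V), ((u k : V))⟫} ⟪w, v⟫) := by
  have hRsymm' (k) : (R k).IsSymmetric := fun x y => by
    simpa only [Submodule.coe_inner] using hRsymm k x y
  have hRpos' (k) (x : Vsub k) (hx : x ≠ 0) : 0 < ⟪R k x, x⟫ := by
    simpa only [Submodule.coe_inner] using hRpos k x hx
  obtain rfl : B = additiveSchwarz Vsub R :=
    LinearMap.ext fun v => by rw [hB, additiveSchwarz_apply]
  refine ⟨isSymmetric_additiveSchwarz R hRsymm',
    fun v hv => inner_additiveSchwarz_self_pos R hsum hRpos' hv, ?_⟩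
  rintro v w rfl
  have hRpositive (k) : (R k).IsPositive := (R k).isPositive_iff.mpr
    ⟨hRsymm' k, LinearMap.inner_map_self_nonneg_of_pos (hRpos' k)⟩
  simpa only [Submodule.coe_inner] using
    isLeast_inner_additiveSchwarz R hRpositive (fun k => (hS k).1) (fun k => (hS k).2) w
end
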